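/- Let (X₁, X₂) be jointly Gaussian with means μ₁, μ₂, variances ν₁₁, ν₂₂ > 0 and covariance ν₁₂. Then E[φ(X₁)φ(X₂)] = (1/√((1+ν₁₁)(1+ν₂₂))) · φ₂(μ₁/√(1+ν₁₁), μ₂/√(1+ν₂₂); ν₁₂/√((1+ν₁₁)(1+ν₂₂))), where φ₂ is the bivariate standard normal density with the indicated correlation. -/

import Mathlib

open MeasureTheory ProbabilityTheory Real
open scoped NNReal

noncomputable def npdf (x : ℝ) : ℝ := (Real.sqrt (2 * Real.pi))⁻¹ * Real.exp (-(x ^ 2) / 2)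

noncomputable def ncdf (x : ℝ) : ℝ := ∫ t in Set.Iic x, npdf t

noncomputable def npdf2 (h k ρ : ℝ) : ℝ :=
  (2 * Real.pi * Real.sqrt (1 - ρ ^ 2))⁻¹ *
    Real.exp (-(h ^ 2 + k ^ 2 - 2 * ρ * h * k) / (2 * (1 - ρ ^ 2)))

noncomputable def P2 : Measure (ℝ × ℝ) :=
  (ProbabilityTheory.gaussianReal 0 1).prod (ProbabilityTheory.gaussianReal 0 1)

/-! `E[φ(X₁)φ(X₂)]` is the density at `0` of `X - Z` for an independent standard normal `Z`,
i.e. the density of `N(0, I + Σ)` at `(μ₁, μ₂)`, and `npdf2` is that density in standardized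
coordinates. With `X = μ + (a W₁, b W₁ + c W₂)`, integrating out `W₂` turns
`φ(μ₂ + b W₁ + c W₂)` into a rescaled `φ`; the remaining integral over `W₁` is that of the
exponential of a quadratic, done by completing the square. -/

lemma integral_exp_neg_quadratic {p : ℝ} (hp : 0 < p) (q r : ℝ) :
    ∫ x : ℝ, exp (-(p * x ^ 2 + q * x + r)) = √(π / p) * exp (q ^ 2 / (4 * p) - r) := by
  have complete_square (x : ℝ) : exp (-(p * x ^ 2 + q * x + r))
      = exp (q ^ 2 / (4 * p) - r) * exp (-p * (x + q / (2 * p)) ^ 2) := by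
    rw [← exp_add]
    congr 1
    field_simp
    ring
  simp_rw [complete_square]
  rw [integral_const_mul, integral_add_right_eq_self (fun x ↦ exp (-p * x ^ 2)),
    integral_gaussian, mul_comm]

lemma npdf_eq_gaussianPDFReal : npdf = gaussianPDFReal 0 1 := by
  ext x
  simp [npdf, gaussianPDFReal]

lemma integral_gaussianReal_zero_one (f : ℝ → ℝ) :
    ∫ x, f x ∂gaussianReal 0 1 = ∫ x, npdf x * f x := by
  rw [integral_gaussianReal_eq_integral_smul one_ne_zero, npdf_eq_gaussianPDFReal]
  rfl

lemma npdf_nonneg (x : ℝ) : 0 ≤ npdf x := by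
  unfold npdf
  positivity

lemma npdf_le (x : ℝ) : npdf x ≤ (√(2 * π))⁻¹ := by
  unfold npdf
  refine mul_le_of_le_one_right (by positivity) (exp_le_one_iff.mpr ?_)
  nlinarith [sq_nonneg x]

@[fun_prop]
lemma continuous_npdf : Continuous npdf := by
  unfold npdf
  fun_prop

lemma integrable_npdf_comp_mul_npdf_comp {α : Type*} [MeasurableSpace α] {μ : Measure α}
    [IsFiniteMeasure μ] {f g : α → ℝ} (hf : Measurable f) (hg : Measurable g) :
    Integrable (fun w ↦ npdf (f w) * npdf (g w)) μ := by
  refine .of_bound (by fun_prop) ((√(2 * π))⁻¹ * (√(2 * π))⁻¹) (.of_forall fun w ↦ ?_)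
  rw [norm_mul, Real.norm_of_nonneg (npdf_nonneg _), Real.norm_of_nonneg (npdf_nonneg _)]
  exact mul_le_mul (npdf_le _) (npdf_le _) (npdf_nonneg _) (by positivity)

lemma integral_npdf_mul_npdf_affine (m c : ℝ) :
    ∫ y, npdf y * npdf (m + c * y) = (√(1 + c ^ 2))⁻¹ * npdf (m / √(1 + c ^ 2)) := by
  have hs : 0 < 1 + c ^ 2 := by positivity
  have hsq : √(1 + c ^ 2) ^ 2 = 1 + c ^ 2 := sq_sqrt hs.le
  have integrand (y : ℝ) : npdf y * npdf (m + c * y)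
      = (√(2 * π))⁻¹ ^ 2 * exp (-((1 + c ^ 2) / 2 * y ^ 2 + m * c * y + m ^ 2 / 2)) := by
    simp only [npdf]
    rw [pow_two, mul_mul_mul_comm, ← exp_add]
    ring_nf
  simp_rw [integrand]
  rw [integral_const_mul, integral_exp_neg_quadratic (by positivity)]
  rw [div_div_eq_mul_div, mul_comm π 2, sqrt_div' _ hs.le]
  simp only [npdf]
  rw [show (m * c) ^ 2 / (4 * ((1 + c ^ 2) / 2)) - m ^ 2 / 2 = -(m / √(1 + c ^ 2)) ^ 2 / 2 by
    rw [div_pow, hsq]; field_simp; ring]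
  field_simp

/-- The density at `(h, k)` of the centered normal law on `ℝ²` with covariance matrix
`!![s₁, r; r, s₂]`. -/
noncomputable def bivariateNormalPDF (s₁ s₂ r h k : ℝ) : ℝ :=
  (2 * π * √(s₁ * s₂ - r ^ 2))⁻¹ *
    exp (-(s₂ * h ^ 2 + s₁ * k ^ 2 - 2 * r * h * k) / (2 * (s₁ * s₂ - r ^ 2)))

lemma integral_npdf_mul_npdf_affine_mul_npdf_affine (m₁ m₂ α β : ℝ) :
    ∫ x, npdf x * (npdf (m₁ + α * x) * npdf (m₂ + β * x))
      = bivariateNormalPDF (1 + α ^ 2) (1 + β ^ 2) (α * β) m₁ m₂ := by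
  have hs : 0 < 1 + α ^ 2 + β ^ 2 := by positivity
  have integrand (x : ℝ) : npdf x * (npdf (m₁ + α * x) * npdf (m₂ + β * x))
      = (√(2 * π))⁻¹ ^ 3 * exp (-((1 + α ^ 2 + β ^ 2) / 2 * x ^ 2 + (m₁ * α + m₂ * β) * x
          + (m₁ ^ 2 + m₂ ^ 2) / 2)) := by
    rw [show -((1 + α ^ 2 + β ^ 2) / 2 * x ^ 2 + (m₁ * α + m₂ * β) * x + (m₁ ^ 2 + m₂ ^ 2) / 2)
        = -x ^ 2 / 2 + (-(m₁ + α * x) ^ 2 / 2 + -(m₂ + β * x) ^ 2 / 2) by ring, exp_add, exp_add]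
    simp only [npdf]
    ring
  have hD : (1 + α ^ 2) * (1 + β ^ 2) - (α * β) ^ 2 = 1 + α ^ 2 + β ^ 2 := by ring
  have h2π : √(2 * π) ^ 2 = 2 * π := sq_sqrt (by positivity)
  simp_rw [integrand]
  rw [integral_const_mul, integral_exp_neg_quadratic (by positivity), bivariateNormalPDF, hD,
    div_div_eq_mul_div, mul_comm π 2, sqrt_div' _ hs.le]
  rw [show (m₁ * α + m₂ * β) ^ 2 / (4 * ((1 + α ^ 2 + β ^ 2) / 2)) - (m₁ ^ 2 + m₂ ^ 2) / 2
      = -((1 + β ^ 2) * m₁ ^ 2 + (1 + α ^ 2) * m₂ ^ 2 - 2 * (α * β) * m₁ * m₂)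
          / (2 * (1 + α ^ 2 + β ^ 2)) by field_simp; ring]
  field_simp
  exact h2π.symm

lemma inv_mul_bivariateNormalPDF_div {t : ℝ} (ht : 0 < t) (s₁ s₂ r h k : ℝ) :
    t⁻¹ * bivariateNormalPDF s₁ s₂ r h (k / t) = bivariateNormalPDF s₁ (t ^ 2 * s₂) (t * r) h k := by
  unfold bivariateNormalPDF
  have hD : s₁ * (t ^ 2 * s₂) - (t * r) ^ 2 = t ^ 2 * (s₁ * s₂ - r ^ 2) := by ring
  rw [hD, sqrt_mul (by positivity), sqrt_sq ht.le]
  field_simp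

lemma inv_sqrt_mul_npdf2 {s₁ s₂ : ℝ} (hs₁ : 0 < s₁) (hs₂ : 0 < s₂) (r h k : ℝ) :
    (√(s₁ * s₂))⁻¹ * npdf2 (h / √s₁) (k / √s₂) (r / √(s₁ * s₂))
      = bivariateNormalPDF s₁ s₂ r h k := by
  have hs : 0 < s₁ * s₂ := by positivity
  have hρ : 1 - (r / √(s₁ * s₂)) ^ 2 = (s₁ * s₂ - r ^ 2) / (s₁ * s₂) := by
    rw [div_pow, sq_sqrt hs.le]
    field_simp
  unfold npdf2 bivariateNormalPDF
  rw [hρ, sqrt_div' _ hs.le, sqrt_mul hs₁.le]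
  field_simp
  rw [sq_sqrt hs₁.le, sq_sqrt hs₂.le, mul_assoc (s₁ * s₂) 2, mul_div_mul_left _ _ hs.ne']

theorem gaussian_expectation_npdf_mul_npdf_general (μ₁ μ₂ ν₁₁ ν₂₂ ν₁₂ a b c : ℝ)
    (h11 : ν₁₁ = a ^ 2) (h22 : ν₂₂ = b ^ 2 + c ^ 2) (h12 : ν₁₂ = a * b) :
    ∫ w : ℝ × ℝ, npdf (μ₁ + a * w.1) * npdf (μ₂ + b * w.1 + c * w.2) ∂P2
      = (Real.sqrt ((1 + ν₁₁) * (1 + ν₂₂)))⁻¹ *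
          npdf2 (μ₁ / Real.sqrt (1 + ν₁₁)) (μ₂ / Real.sqrt (1 + ν₂₂))
            (ν₁₂ / Real.sqrt ((1 + ν₁₁) * (1 + ν₂₂))) := by
  subst h11 h22 h12
  set q := √(1 + c ^ 2)
  have hq : 0 < q := sqrt_pos.mpr (by positivity)
  have inner_integral (x : ℝ) : ∫ y, npdf y * (npdf (μ₁ + a * x) * npdf (μ₂ + b * x + c * y))
      = q⁻¹ * (npdf (μ₁ + a * x) * npdf (μ₂ / q + b / q * x)) := by
    simp_rw [mul_left_comm (npdf _) (npdf (μ₁ + a * x))]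
    rw [integral_const_mul, integral_npdf_mul_npdf_affine, add_div, mul_div_right_comm]
    ring
  have hs₂ : q ^ 2 * (1 + (b / q) ^ 2) = 1 + (b ^ 2 + c ^ 2) := by
    rw [mul_add, ← mul_pow, mul_div_cancel₀ _ hq.ne', sq_sqrt (by positivity)]
    ring
  rw [inv_sqrt_mul_npdf2 (by positivity) (by positivity), P2,
    integral_prod _ (integrable_npdf_comp_mul_npdf_comp (by fun_prop) (by fun_prop))]
  simp_rw [integral_gaussianReal_zero_one, inner_integral, mul_left_comm _ q⁻¹, integral_const_mul,
    integral_npdf_mul_npdf_affine_mul_npdf_affine, inv_mul_bivariateNormalPDF_div hq]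
  rw [hs₂]
  congr 1
  field_simp

theorem gaussian_expectation_npdf_mul_npdf (μ₁ μ₂ ν₁₁ ν₂₂ ν₁₂ a b c : ℝ)
    (h11 : ν₁₁ = a ^ 2) (h22 : ν₂₂ = b ^ 2 + c ^ 2) (h12 : ν₁₂ = a * b)
    (hp1 : 0 < ν₁₁) (hp2 : 0 < ν₂₂) :
    ∫ w : ℝ × ℝ, npdf (μ₁ + a * w.1) * npdf (μ₂ + b * w.1 + c * w.2) ∂P2
      = (Real.sqrt ((1 + ν₁₁) * (1 + ν₂₂)))⁻¹ *
          npdf2 (μ₁ / Real.sqrt (1 + ν₁₁)) (μ₂ / Real.sqrt (1 + ν₂₂))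
            (ν₁₂ / Real.sqrt ((1 + ν₁₁) * (1 + ν₂₂))) :=
  gaussian_expectation_npdf_mul_npdf_general μ₁ μ₂ ν₁₁ ν₂₂ ν₁₂ a b c h11 h22 h12
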